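/- The series sum over k≥1 of 1/(2^(k+2)·(2k-1)·k²·(2k+1)) equals 1/2 + (1/8)ln²(2) - π²/48 - (1/(2√2))·ln(1+√2). -/

import Mathlib

/-!
Partial fractions split the summand into `2⁻ᵏ (1/(2k+1) - 1/(2k+3)) / 4`, which telescopes against
the series of `artanh (1/√2)`, and `2⁻⁽ᵏ⁺¹⁾ / (k+1)² / 4`, which sums to `Li₂(1/2) / 4`.
The value `Li₂(1/2) = π²/12 - log² 2 / 2` is Euler's reflection formula at `1/2`: the derivative
of `-log t · log (1 - t)` expands as `∑ (tᵐ - (1-t)ᵐ)/(m+1)`, and integrating over `[1/2, 1]`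
gives `ζ(2) - 2 Li₂(1/2)` termwise and `log² 2` by the fundamental theorem of calculus.
-/

open Real Filter Topology MeasureTheory Set Asymptotics

lemma hasSum_integral_of_nonneg {α ι : Type*} [MeasurableSpace α] [Countable ι] {μ : Measure α}
    {F : ι → α → ℝ} (hF_int : ∀ i, Integrable (F i) μ) (hF_nonneg : ∀ i, 0 ≤ᵐ[μ] F i)
    (hF_sum : Summable fun i => ∫ a, F i a ∂μ) :
    HasSum (fun i => ∫ a, F i a ∂μ) (∫ a, ∑' i, F i a ∂μ) := by
  refine hasSum_integral_of_summable_integral_norm hF_int (hF_sum.congr fun i => ?_)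
  exact integral_congr_ae ((hF_nonneg i).mono fun a ha => (norm_of_nonneg ha).symm)

noncomputable def dilog (x : ℝ) : ℝ := ∑' n : ℕ, x ^ (n + 1) / ((n : ℝ) + 1) ^ 2

lemma summable_one_div_nat_add_one_sq : Summable fun n : ℕ => 1 / ((n : ℝ) + 1) ^ 2 := by
  simpa using Real.summable_one_div_nat_add_rpow 1 2

lemma hasSum_dilog {x : ℝ} (hx : |x| ≤ 1) :
    HasSum (fun n : ℕ => x ^ (n + 1) / ((n : ℝ) + 1) ^ 2) (dilog x) := by
  refine (Summable.of_norm_bounded summable_one_div_nat_add_one_sq fun n => ?_).hasSum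
  rw [norm_div, norm_pow, Real.norm_eq_abs, norm_of_nonneg (by positivity)]
  gcongr
  exact pow_le_one₀ (abs_nonneg x) hx

lemma dilog_one : dilog 1 = π ^ 2 / 6 := by
  refine (hasSum_dilog (by simp)).unique ?_
  simpa using (hasSum_nat_add_iff' 1).2 hasSum_zeta_two

lemma continuousAt_log_mul_log_one_sub_one :
    ContinuousAt (fun t => log t * log (1 - t)) 1 := by
  have hlog : (fun t => log t) =O[𝓝 1] (fun t => t - 1) := by
    simpa using (hasDerivAt_log one_ne_zero).isBigO_sub
  have hmul : Tendsto (fun t => (t - 1) * log (1 - t)) (𝓝 1) (𝓝 0) := by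
    have := ((continuous_mul_log.comp (continuous_sub_left (1 : ℝ))).tendsto 1).neg
    have h : (fun t : ℝ => (t - 1) * log (1 - t)) = fun t => -((1 - t) * log (1 - t)) := by
      funext t; ring
    simpa [h] using this
  simpa [ContinuousAt] using (hlog.mul (isBigO_refl _ _)).trans_tendsto hmul

lemma continuous_log_mul_log_one_sub : Continuous fun t => log t * log (1 - t) := by
  rw [continuous_iff_continuousAt]
  intro t
  by_cases h1 : t = 1
  · exact h1 ▸ continuousAt_log_mul_log_one_sub_one
  by_cases h0 : t = 0
  · -- the function is invariant under `t ↦ 1 - t`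
    have := continuousAt_log_mul_log_one_sub_one.comp_of_eq
      (continuous_sub_left (1 : ℝ)).continuousAt (sub_zero 1)
    subst h0
    simpa [Function.comp_def, mul_comm] using this
  exact (continuousAt_log h0).mul ((continuousAt_log (sub_ne_zero.2 (Ne.symm h1))).comp
    (by fun_prop))

lemma integral_pow_sub_one_sub_pow (m : ℕ) :
    ∫ t in (1 / 2 : ℝ)..1, (t ^ m - (1 - t) ^ m) / ((m : ℝ) + 1) =
      1 / ((m : ℝ) + 1) ^ 2 - 2 * ((1 / 2) ^ (m + 1) / ((m : ℝ) + 1) ^ 2) := by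
  have hpow : IntervalIntegrable (fun t : ℝ => t ^ m) volume (1 / 2) 1 :=
    (continuous_pow m).intervalIntegrable _ _
  have hpow' : IntervalIntegrable (fun t : ℝ => (1 - t) ^ m) volume (1 / 2) 1 :=
    ((continuous_sub_left 1).pow m).intervalIntegrable _ _
  rw [intervalIntegral.integral_div, intervalIntegral.integral_sub hpow hpow',
    intervalIntegral.integral_comp_sub_left (fun u => u ^ m), integral_pow, integral_pow]
  norm_num
  field_simp
  ring

lemma hasSum_pow_div_succ {t : ℝ} (h : |t| < 1) (h0 : t ≠ 0) :
    HasSum (fun m : ℕ => t ^ m / ((m : ℝ) + 1)) (-log (1 - t) / t) := by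
  refine ((hasSum_pow_div_log_of_abs_lt_one h).div_const t).congr_fun fun m => ?_
  field_simp
  ring

lemma hasSum_log_div_one_sub_sub {t : ℝ} (h0 : 0 < t) (h1 : t < 1) :
    HasSum (fun m : ℕ => (t ^ m - (1 - t) ^ m) / ((m : ℝ) + 1))
      (log t / (1 - t) - log (1 - t) / t) := by
  have ht := hasSum_pow_div_succ (abs_lt.2 ⟨by linarith, h1⟩) h0.ne'
  have hs := hasSum_pow_div_succ (t := 1 - t) (abs_lt.2 ⟨by linarith, by linarith⟩) (by linarith)
  rw [sub_sub_cancel] at hs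
  rw [show log t / (1 - t) - log (1 - t) / t = -log (1 - t) / t - -log t / (1 - t) by ring]
  simpa only [sub_div] using ht.sub hs

lemma pow_sub_one_sub_pow_div_nonneg {t : ℝ} (h : 1 / 2 ≤ t) (h1 : t ≤ 1) (m : ℕ) :
    0 ≤ (t ^ m - (1 - t) ^ m) / ((m : ℝ) + 1) := by
  have := pow_le_pow_left₀ (by linarith : 0 ≤ 1 - t) (by linarith : 1 - t ≤ t) m
  exact div_nonneg (by linarith) (by positivity)

lemma hasDerivAt_neg_log_mul_log_one_sub {t : ℝ} (h0 : t ≠ 0) (h1 : t ≠ 1) :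
    HasDerivAt (fun t => -(log t * log (1 - t))) (log t / (1 - t) - log (1 - t) / t) t := by
  have h1' : 1 - t ≠ 0 := sub_ne_zero.2 (Ne.symm h1)
  refine ((hasDerivAt_log h0).mul (((hasDerivAt_id' t).const_sub 1).log h1')).neg.congr_deriv ?_
  field_simp
  ring

lemma integral_log_div_one_sub_sub :
    ∫ t in (1 / 2 : ℝ)..1, (log t / (1 - t) - log (1 - t) / t) = log 2 ^ 2 := by
  have hcont : ContinuousOn (fun t => -(log t * log (1 - t))) (Icc (1 / 2 : ℝ) 1) :=
    continuous_log_mul_log_one_sub.neg.continuousOn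
  have hderiv : ∀ t ∈ Ioo (1 / 2 : ℝ) 1, HasDerivAt (fun t => -(log t * log (1 - t)))
      (log t / (1 - t) - log (1 - t) / t) t := fun t ht =>
    hasDerivAt_neg_log_mul_log_one_sub (by linarith [ht.1]) ht.2.ne
  have hnonneg : ∀ t ∈ Ioo (1 / 2 : ℝ) 1, 0 ≤ log t / (1 - t) - log (1 - t) / t := by
    intro t ht
    exact (hasSum_log_div_one_sub_sub (by linarith [ht.1]) ht.2).nonneg
      (pow_sub_one_sub_pow_div_nonneg ht.1.le ht.2.le)
  -- The integrand is unbounded near `1`; it is integrable because it is a nonnegative derivative.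
  rw [intervalIntegral.integral_eq_sub_of_hasDerivAt_of_le (by norm_num) hcont hderiv
    ((intervalIntegrable_iff_integrableOn_Ioc_of_le (by norm_num)).2
      (intervalIntegral.integrableOn_deriv_of_nonneg hcont hderiv hnonneg))]
  norm_num
  rw [one_div, log_inv]
  ring

lemma dilog_one_half : dilog (1 / 2) = π ^ 2 / 12 - log 2 ^ 2 / 2 := by
  let F : ℕ → ℝ → ℝ := fun m t => (t ^ m - (1 - t) ^ m) / ((m : ℝ) + 1)
  have hterm : HasSum (fun m => ∫ t in (1 / 2 : ℝ)..1, F m t) (dilog 1 - 2 * dilog (1 / 2)) := by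
    simp only [F, integral_pow_sub_one_sub_pow]
    exact (hasSum_dilog (by simp)).sub ((hasSum_dilog (by norm_num)).mul_left 2)
      |>.congr_fun fun m => by simp
  have hIoo (f : ℝ → ℝ) : ∫ t in (1 / 2 : ℝ)..1, f t = ∫ t in Ioo (1 / 2 : ℝ) 1, f t := by
    rw [intervalIntegral.integral_of_le (by norm_num), integral_Ioc_eq_integral_Ioo]
  have hswap : HasSum (fun m => ∫ t in (1 / 2 : ℝ)..1, F m t) (log 2 ^ 2) := by
    simp only [hIoo] at hterm ⊢
    rw [← integral_log_div_one_sub_sub, hIoo, setIntegral_congr_fun measurableSet_Ioo fun t ht =>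
        (hasSum_log_div_one_sub_sub (by linarith [ht.1]) ht.2).tsum_eq.symm]
    refine hasSum_integral_of_nonneg (fun m => ?_) (fun m => ?_) ?_
    · exact (by fun_prop : Continuous (F m)).integrableOn_Icc.mono_set Ioo_subset_Icc_self
    · refine (ae_restrict_mem measurableSet_Ioo).mono fun t ht => ?_
      exact pow_sub_one_sub_pow_div_nonneg ht.1.le ht.2.le m
    · exact hterm.summable
  have := hterm.unique hswap
  rw [dilog_one] at this
  linarith

lemma hasSum_sq_pow_div_two_mul_add_one {x : ℝ} (hx : |x| < 1) (hx0 : x ≠ 0) :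
    HasSum (fun k : ℕ => (x ^ 2) ^ k / (2 * k + 1)) ((log (1 + x) - log (1 - x)) / (2 * x)) := by
  refine ((hasSum_log_sub_log_of_abs_lt_one hx).div_const (2 * x)).congr_fun fun k => ?_
  rw [← pow_mul, pow_succ]
  field_simp

lemma hasSum_half_pow_div_two_mul_add_one :
    HasSum (fun k : ℕ => (1 / 2 : ℝ) ^ k / (2 * k + 1)) (√2 * log (1 + √2)) := by
  have hsq : √2 ^ 2 = 2 := sq_sqrt zero_le_two
  have hlt : √2 < 2 := by nlinarith [sqrt_nonneg 2]
  have h := hasSum_sq_pow_div_two_mul_add_one (x := √2 / 2)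
    (abs_lt.2 ⟨by linarith [sqrt_nonneg 2], by linarith⟩) (by positivity)
  have hhalf : (√2 / 2) ^ 2 = 1 / 2 := by rw [div_pow, hsq]; norm_num
  have hlog : log (1 + √2 / 2) - log (1 - √2 / 2) = 2 * log (1 + √2) := by
    rw [← log_div (by positivity) (by linarith), two_mul, ← log_mul (by positivity) (by positivity)]
    congr 1
    rw [div_eq_iff (by linarith)]
    linear_combination √2 / 2 * hsq
  rw [hhalf, hlog] at h
  convert h using 1
  field_simp
  rw [hsq]
  ring

lemma hasSum_pow_div_two_mul_add_three {y S : ℝ} (hy : y ≠ 0)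
    (h : HasSum (fun k : ℕ => y ^ k / (2 * k + 1)) S) :
    HasSum (fun k : ℕ => y ^ k / (2 * k + 3)) ((S - 1) / y) := by
  have := ((hasSum_nat_add_iff' 1).2 h).div_const y
  rw [Finset.sum_range_one, show y ^ 0 / (2 * ((0 : ℕ) : ℝ) + 1) = 1 by simp] at this
  refine this.congr_fun fun k => ?_
  push_cast
  field_simp
  ring

lemma summand_eq_partial_fractions (k : ℕ) :
    1 / (2 ^ (k + 3) * (2 * (k : ℝ) + 1) * (k + 1) ^ 2 * (2 * k + 3)) =
      1 / 4 * ((1 / 2) ^ k / (2 * k + 1)) - 1 / 4 * ((1 / 2) ^ k / (2 * k + 3))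
        - 1 / 4 * ((1 / 2) ^ (k + 1) / ((k : ℝ) + 1) ^ 2) := by
  rw [one_div_pow, one_div_pow]
  field_simp
  ring

theorem stmt_10 :
    ∑' k : ℕ, 1 / (2 ^ (k + 3) * (2 * (k : ℝ) + 1) * (k + 1) ^ 2 * (2 * k + 3)) =
      1 / 2 + (1 / 8) * Real.log 2 ^ 2 - Real.pi ^ 2 / 48
        - (1 / (2 * Real.sqrt 2)) * Real.log (1 + Real.sqrt 2) := by
  have hS := hasSum_half_pow_div_two_mul_add_one
  have h := ((hS.mul_left (1 / 4)).sub
    ((hasSum_pow_div_two_mul_add_three (by norm_num) hS).mul_left (1 / 4))).sub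
    ((hasSum_dilog (x := 1 / 2) (by norm_num [abs_of_pos])).mul_left (1 / 4))
  rw [(h.congr_fun summand_eq_partial_fractions).tsum_eq, dilog_one_half]
  have hinv : 1 / (2 * √2) = √2 / 4 := by
    field_simp
    rw [sq_sqrt zero_le_two]
    norm_num
  rw [hinv]
  ring
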